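/- arXiv:1806.01835 — 3 statements merged into one kernel-verified Lean document; each statement's English description precedes it below -/
import Mathlib

section
/- Let v be a word over {a,b} with ℓ_a occurrences of a and ℓ_b occurrences of b. If v is not an isoterm for UT_2 (equivalently, there exists u ≠ v of the same content with conv(γ^{u,a}) = conv(γ^{v,a}) and conv(γ^{u,b}) = conv(γ^{v,b})), then ℓ_a ≥ 4; and if ℓ_a = 4, then ℓ_b > 6. -/
/-!
Equal convex hulls have the same support functions, so every linear inequality that holds on
`γ^{v,a}` (resp. `γ^{v,b}`) holds on `γ^{u,a}` (resp. `γ^{u,b}`), and conversely. For `ℓ_a ≤ 3`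
the `a`-hull alone recovers the `α`-sequence, which together with the content determines the
word: the directions `(∓(ℓ_b + 1), 1)` expose the first and the last point, and for `ℓ_a = 3`
the middle point is either a vertex or the midpoint of the other two. For `ℓ_a = 4` and
`ℓ_b ≤ 6` there are finitely many words, and the support functions in ten fixed integer
directions already separate them.
-/

/-- The letter `a` of the two-letter alphabet, encoded as `true`. -/
def ltrA : Bool := true

/-- The letter `b` of the two-letter alphabet, encoded as `false`. -/
def ltrB : Bool := false

/-- `alphaH w i` is the number of `b`'s occurring before the `(i+1)`-th `a` in `w`. -/
def alphaH : List Bool → ℕ → ℕ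
  | [], _ => 0
  | (x :: rest), i =>
      if x = ltrA then (if i = 0 then 0 else alphaH rest (i - 1))
      else alphaH rest i + 1

/-- `betaH w i` is the number of `a`'s occurring before the `(i+1)`-th `b` in `w`. -/
def betaH (w : List Bool) (i : ℕ) : ℕ := alphaH (w.map (!·)) i

/-- The `a`-height `γ^{w,a} = {(i, α^w_i) : 0 ≤ i < ℓ_a}`, as a subset of `ℝ²`. -/
def gammaA (w : List Bool) : Set (ℝ × ℝ) :=
  {p | ∃ i, i < w.count ltrA ∧ p = ((i : ℝ), (alphaH w i : ℝ))}

/-- The `b`-height `γ^{w,b} = {(β^w_i, i) : 0 ≤ i < ℓ_b}`, as a subset of `ℝ²`. -/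
def gammaB (w : List Bool) : Set (ℝ × ℝ) :=
  {p | ∃ i, i < w.count ltrB ∧ p = ((betaH w i : ℝ), (i : ℝ))}

section Words

@[simp] lemma ltrA_eq_true : ltrA = true := rfl

@[simp] lemma ltrB_eq_false : ltrB = false := rfl

@[simp] lemma alphaH_cons_true_zero (w : List Bool) : alphaH (true :: w) 0 = 0 := rfl

@[simp] lemma alphaH_cons_true_succ (w : List Bool) (i : ℕ) :
    alphaH (true :: w) (i + 1) = alphaH w i := rfl

@[simp] lemma alphaH_cons_false (w : List Bool) (i : ℕ) :
    alphaH (false :: w) i = alphaH w i + 1 := rfl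

lemma alphaH_le_count (w : List Bool) (i : ℕ) : alphaH w i ≤ w.count ltrB := by
  induction w generalizing i with
  | nil => exact Nat.zero_le _
  | cons x w ih =>
    simp only [ltrB_eq_false] at ih ⊢
    cases x
    · simpa using ih i
    · cases i <;> simp [ih]

lemma eq_of_alphaH_eq : ∀ {u v : List Bool}, u.count ltrA = v.count ltrA →
    u.count ltrB = v.count ltrB →
    (∀ i < v.count ltrA, alphaH u i = alphaH v i) → u = v
  | [], [], _, _, _ => rfl
  | [], y :: v, hca, hcb, _ | y :: v, [], hca, hcb, _ => by cases y <;> simp at hca hcb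
  | true :: u, true :: v, hca, hcb, hα => by
    refine congrArg _ (eq_of_alphaH_eq (by simpa using hca) (by simpa using hcb)
      fun i hi => by simpa using hα (i + 1) (by simpa using hi))
  | false :: u, false :: v, hca, hcb, hα => by
    refine congrArg _ (eq_of_alphaH_eq (by simpa using hca) (by simpa using hcb)
      fun i hi => by simpa using hα i (by simpa using hi))
  | true :: u, false :: v, hca, _, hα => by
    simpa using hα 0 (by rw [← hca]; simp)
  | false :: u, true :: v, _, _, hα => by
    simpa using hα 0 (by simp)

end Words

section ConvexHull

lemma forall_le_of_convexHull_eq {E : Type*} [AddCommGroup E] [Module ℝ E] {s t : Set E}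
    (h : convexHull ℝ s = convexHull ℝ t) (f : E →ₗ[ℝ] ℝ) {M : ℝ} (ht : ∀ y ∈ t, f y ≤ M) :
    ∀ x ∈ s, f x ≤ M := fun _ hx =>
  convexHull_min ht (convex_halfSpace_le f.isLinear M) (h ▸ subset_convexHull ℝ s hx)

lemma forall_le_iff_of_convexHull_eq {E : Type*} [AddCommGroup E] [Module ℝ E] {s t : Set E}
    (h : convexHull ℝ s = convexHull ℝ t) (f : E →ₗ[ℝ] ℝ) (M : ℝ) :
    (∀ x ∈ s, f x ≤ M) ↔ ∀ y ∈ t, f y ≤ M :=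
  ⟨forall_le_of_convexHull_eq h.symm f, forall_le_of_convexHull_eq h f⟩

lemma List.max?_eq_some_of_forall_le_iff {α : Type*} [LinearOrder α] [NoMinOrder α]
    {l l' : List α} (h : ∀ M, (∀ x ∈ l, x ≤ M) ↔ ∀ x ∈ l', x ≤ M) {m : α}
    (hm : l.max? = some m) : l'.max? = some m := by
  have hub : ∀ x ∈ l', x ≤ m := (h m).1 ((List.max?_le_iff hm).1 le_rfl)
  cases hl' : l'.max? with
  | none =>
    obtain ⟨M, hM⟩ := exists_lt m
    have hl'_nil : l' = [] := List.max?_eq_none_iff.1 hl'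
    exact absurd ((h M).2 (by simp [hl'_nil]) m (List.max?_mem hm)) (not_le.2 hM)
  | some m' =>
    exact congrArg some (le_antisymm ((List.max?_le_iff hl').2 hub)
      ((List.max?_le_iff hm).2 ((h m').2 ((List.max?_le_iff hl').1 le_rfl))))

lemma List.max?_eq_of_forall_le_iff {α : Type*} [LinearOrder α] [NoMinOrder α] {l l' : List α}
    (h : ∀ M, (∀ x ∈ l, x ≤ M) ↔ ∀ x ∈ l', x ≤ M) : l.max? = l'.max? := by
  cases hl : l.max? with
  | some m => exact (List.max?_eq_some_of_forall_le_iff h hl).symm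
  | none =>
    cases hl' : l'.max? with
    | none => rfl
    | some m => simpa [hl] using List.max?_eq_some_of_forall_le_iff (fun M => (h M).symm) hl'

variable {u v : List Bool}

lemma gammaA_eq_image (w : List Bool) :
    gammaA w = (fun i : ℕ => ((i : ℝ), (alphaH w i : ℝ))) '' Set.Iio (w.count ltrA) := by
  ext; simp [gammaA, eq_comm]

lemma gammaA_forall_le_iff (hA : convexHull ℝ (gammaA u) = convexHull ℝ (gammaA v))
    (p q M : ℤ) :
    (∀ i < u.count ltrA, p * i + q * alphaH u i ≤ M) ↔
      ∀ i < v.count ltrA, p * i + q * alphaH v i ≤ M := by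
  have key := forall_le_iff_of_convexHull_eq hA
    (p • LinearMap.fst ℝ ℝ ℝ + q • LinearMap.snd ℝ ℝ ℝ) M
  simp only [gammaA_eq_image, Set.forall_mem_image, Set.mem_Iio, LinearMap.add_apply,
    LinearMap.smul_apply, LinearMap.fst_apply, LinearMap.snd_apply, zsmul_eq_mul] at key
  exact_mod_cast key

lemma gammaB_eq_image (w : List Bool) :
    gammaB w = (fun j : ℕ => ((betaH w j : ℝ), (j : ℝ))) '' Set.Iio (w.count ltrB) := by
  ext; simp [gammaB, eq_comm]

lemma gammaB_forall_le_iff (hB : convexHull ℝ (gammaB u) = convexHull ℝ (gammaB v))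
    (p q M : ℤ) :
    (∀ j < u.count ltrB, p * betaH u j + q * j ≤ M) ↔
      ∀ j < v.count ltrB, p * betaH v j + q * j ≤ M := by
  have key := forall_le_iff_of_convexHull_eq hB
    (p • LinearMap.fst ℝ ℝ ℝ + q • LinearMap.snd ℝ ℝ ℝ) M
  simp only [gammaB_eq_image, Set.forall_mem_image, Set.mem_Iio, LinearMap.add_apply,
    LinearMap.smul_apply, LinearMap.fst_apply, LinearMap.snd_apply, zsmul_eq_mul] at key
  exact_mod_cast key

end ConvexHull

section SupportFunction

def supportA (w : List Bool) (d : ℤ × ℤ) : Option ℤ :=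
  ((List.range (w.count ltrA)).map fun i => d.1 * i + d.2 * alphaH w i).max?

def supportB (w : List Bool) (d : ℤ × ℤ) : Option ℤ :=
  ((List.range (w.count ltrB)).map fun j => d.1 * betaH w j + d.2 * j).max?

variable {u v : List Bool}

lemma supportA_eq_of_convexHull_eq (hA : convexHull ℝ (gammaA u) = convexHull ℝ (gammaA v)) :
    supportA u = supportA v :=
  funext fun d => List.max?_eq_of_forall_le_iff fun M => by
    simpa using gammaA_forall_le_iff hA d.1 d.2 M

lemma supportB_eq_of_convexHull_eq (hB : convexHull ℝ (gammaB u) = convexHull ℝ (gammaB v)) :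
    supportB u = supportB v :=
  funext fun d => List.max?_eq_of_forall_le_iff fun M => by
    simpa using gammaB_forall_le_iff hB d.1 d.2 M

end SupportFunction

section FewLettersA

variable {u v : List Bool}

lemma alphaH_zero_le (hA : convexHull ℝ (gammaA u) = convexHull ℝ (gammaA v))
    (hu : 0 < u.count ltrA) : alphaH u 0 ≤ alphaH v 0 := by
  have hbound : ∀ i < v.count ltrA,
      -((v.count ltrB : ℤ) + 1) * i + 1 * alphaH v i ≤ alphaH v 0 := by
    rintro (_ | i) -
    · simp
    · have := alphaH_le_count v (i + 1)
      push_cast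
      nlinarith
  simpa using (gammaA_forall_le_iff hA _ _ _).2 hbound 0 hu

lemma alphaH_zero_eq (hca : u.count ltrA = v.count ltrA)
    (hA : convexHull ℝ (gammaA u) = convexHull ℝ (gammaA v)) (hv : 0 < v.count ltrA) :
    alphaH u 0 = alphaH v 0 :=
  le_antisymm (alphaH_zero_le hA (hca ▸ hv)) (alphaH_zero_le hA.symm hv)

lemma alphaH_last_le (hca : u.count ltrA = v.count ltrA)
    (hA : convexHull ℝ (gammaA u) = convexHull ℝ (gammaA v)) (hv : 0 < v.count ltrA) :
    alphaH u (v.count ltrA - 1) ≤ alphaH v (v.count ltrA - 1) := by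
  set n := v.count ltrA - 1
  have hbound : ∀ i < v.count ltrA, ((v.count ltrB : ℤ) + 1) * i + 1 * alphaH v i ≤
      ((v.count ltrB : ℤ) + 1) * n + 1 * alphaH v n := by
    intro i hi
    obtain rfl | hlt : i = n ∨ i < n := by omega
    · rfl
    · have := alphaH_le_count v i
      have : (i : ℤ) + 1 ≤ n := by exact_mod_cast hlt
      nlinarith
  simpa using (gammaA_forall_le_iff hA _ _ _).2 hbound n (by omega)

lemma alphaH_last_eq (hca : u.count ltrA = v.count ltrA)
    (hA : convexHull ℝ (gammaA u) = convexHull ℝ (gammaA v)) (hv : 0 < v.count ltrA) :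
    alphaH u (v.count ltrA - 1) = alphaH v (v.count ltrA - 1) :=
  le_antisymm (alphaH_last_le hca hA hv) (hca ▸ alphaH_last_le hca.symm hA.symm (hca ▸ hv))

lemma alphaH_one_eq_of_count_eq_three (hca : u.count ltrA = v.count ltrA)
    (hA : convexHull ℝ (gammaA u) = convexHull ℝ (gammaA v)) (h3 : v.count ltrA = 3)
    (h0 : alphaH u 0 = alphaH v 0) (h2 : alphaH u 2 = alphaH v 2) :
    alphaH u 1 = alphaH v 1 := by
  -- Over `x = 1` the hull is the segment between `α₁` and `(α₀ + α₂) / 2`; the directions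
  -- `±(α₀ - α₂, 2)` read off its two endpoints.
  have key := gammaA_forall_le_iff hA
  simp only [hca, h3, Nat.forall_lt_succ_left, Nat.not_lt_zero, IsEmpty.forall_iff,
    implies_true, and_true, h0, h2] at key
  set c0 : ℤ := (alphaH v 0 : ℤ)
  set c2 : ℤ := (alphaH v 2 : ℤ)
  have e1 := key (c0 - c2) 2 (max (2 * c0) (c0 - c2 + 2 * alphaH v 1))
  have e2 := key (c2 - c0) (-2) (max (-2 * c0) (c2 - c0 - 2 * alphaH v 1))
  have e3 := key (c0 - c2) 2 (max (2 * c0) (c0 - c2 + 2 * alphaH u 1))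
  have e4 := key (c2 - c0) (-2) (max (-2 * c0) (c2 - c0 - 2 * alphaH u 1))
  push_cast at e1 e2 e3 e4
  omega

lemma eq_of_convexHull_gammaA_eq_of_count_le_three (hca : u.count ltrA = v.count ltrA)
    (hcb : u.count ltrB = v.count ltrB)
    (hA : convexHull ℝ (gammaA u) = convexHull ℝ (gammaA v)) (h3 : v.count ltrA ≤ 3) :
    u = v := by
  refine eq_of_alphaH_eq hca hcb fun i hi => ?_
  have hv : 0 < v.count ltrA := by omega
  have h0 := alphaH_zero_eq hca hA hv
  have hl := alphaH_last_eq hca hA hv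
  interval_cases h : v.count ltrA <;> interval_cases i
  all_goals first
    | exact h0
    | exact hl
    | exact alphaH_one_eq_of_count_eq_three (hca.trans h.symm) hA h h0 hl

end FewLettersA

section FourLettersA

def wordsOfLength : ℕ → List (List Bool)
  | 0 => [[]]
  | n + 1 => (wordsOfLength n).flatMap fun w => [false :: w, true :: w]

lemma mem_wordsOfLength_length : ∀ w : List Bool, w ∈ wordsOfLength w.length
  | [] => List.mem_singleton_self _
  | x :: w => List.mem_flatMap.2 ⟨w, mem_wordsOfLength_length w, by cases x <;> simp⟩

-- The directions were found by a computer search.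
def hullKey (w : List Bool) : List (Option ℤ) :=
  [(-6, 5), (5, -4), (-2, 5), (1, -6), (-5, 2), (5, -2), (-5, 3), (5, -3)].map (supportA w) ++
    [(-6, 1), (3, -1)].map (supportB w)

variable {u v : List Bool}

lemma hullKey_eq_of_convexHull_eq (hA : convexHull ℝ (gammaA u) = convexHull ℝ (gammaA v))
    (hB : convexHull ℝ (gammaB u) = convexHull ℝ (gammaB v)) : hullKey u = hullKey v := by
  rw [hullKey, hullKey, supportA_eq_of_convexHull_eq hA, supportB_eq_of_convexHull_eq hB]

theorem nodup_map_hullKey : ∀ lb ≤ 6,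
    (((wordsOfLength (4 + lb)).filter (·.count ltrA = 4)).map hullKey).Nodup := by
  decide +kernel

lemma eq_of_hullKey_eq (hca : u.count ltrA = v.count ltrA) (hcb : u.count ltrB = v.count ltrB)
    (h4 : v.count ltrA = 4) (h6 : v.count ltrB ≤ 6) (hkey : hullKey u = hullKey v) : u = v := by
  have mem : ∀ w : List Bool, w.count ltrA = 4 → w.count ltrB = v.count ltrB →
      w ∈ (wordsOfLength (4 + v.count ltrB)).filter (·.count ltrA = 4) := by
    intro w ha hb
    have hlen : w.length = 4 + v.count ltrB := by
      rw [← List.count_true_add_count_false]; simp_all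
    exact List.mem_filter.2 ⟨hlen ▸ mem_wordsOfLength_length w, decide_eq_true ha⟩
  exact List.inj_on_of_nodup_map (nodup_map_hullKey _ h6) (mem u (hca.trans h4) hcb) (mem v h4 rfl)
    hkey

end FourLettersA

/-- If `v ∈ W(ℓ_a, ℓ_b)` is not an isoterm for `UT_2`, then `ℓ_a ≥ 4`, and if
`ℓ_a = 4` then `ℓ_b > 6`. -/
theorem not_isoterm_bounds (v : List Bool)
    (h : ∃ u : List Bool, u ≠ v ∧ u.count ltrA = v.count ltrA ∧
      u.count ltrB = v.count ltrB ∧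
      convexHull ℝ (gammaA u) = convexHull ℝ (gammaA v) ∧
      convexHull ℝ (gammaB u) = convexHull ℝ (gammaB v)) :
    4 ≤ v.count ltrA ∧ (v.count ltrA = 4 → 6 < v.count ltrB) := by
  obtain ⟨u, hne, hca, hcb, hA, hB⟩ := h
  refine ⟨?_, fun h4 => ?_⟩
  · by_contra! h3
    exact hne (eq_of_convexHull_gammaA_eq_of_count_le_three hca hcb hA (by omega))
  · by_contra! h6
    exact hne (eq_of_hullKey_eq hca hcb h4 h6 (hullKey_eq_of_convexHull_eq hA hB))
end

section
/- Every word w over {a, b} of length at most 9 is an isoterm for UT_2 (equivalently, for the bicyclic monoid): w ∼_2 v implies v = w. -/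
/-- Tropical (max-plus) matrix multiplication over `ℝ ∪ {-∞}`. -/
noncomputable def tmul {n : ℕ} (A B : Matrix (Fin n) (Fin n) EReal) :
    Matrix (Fin n) (Fin n) EReal :=
  fun i j => ⨆ k, A i k + B k j

/-- The tropical identity matrix: `0` on the diagonal, `-∞` elsewhere. -/
noncomputable def tOne {n : ℕ} : Matrix (Fin n) (Fin n) EReal :=
  fun i j => if i = j then 0 else ⊥

/-- Tropical product of a list of matrices. -/
noncomputable def tProd {n : ℕ} (l : List (Matrix (Fin n) (Fin n) EReal)) :
    Matrix (Fin n) (Fin n) EReal :=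
  l.foldr tmul tOne

/-- A matrix is upper triangular if all entries below the diagonal are `-∞`. -/
def IsUT {n : ℕ} (A : Matrix (Fin n) (Fin n) EReal) : Prop :=
  ∀ i j : Fin n, j < i → A i j = ⊥

/-- `w = v` is a semigroup identity for `UT_n`: every assignment of upper
triangular tropical matrices to the letters gives equal products. -/
noncomputable def UTId (n : ℕ) {σ : Type*} (w v : List σ) : Prop :=
  ∀ φ : σ → Matrix (Fin n) (Fin n) EReal, (∀ s, IsUT (φ s)) →
    tProd (w.map φ) = tProd (v.map φ)

/-!
Evaluating a word at the upper triangular matrices `[[p s, g s], [⊥, 0]]` puts into the top row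
the total `p`-weight of the word and `max_i (p w₀ + ⋯ + p wᵢ₋₁ + g wᵢ)`. When `g` is `0` on a letter
`c` and `⊥` elsewhere, the latter is the support function in direction `p` of the convex hull of
the `c`-heights of the staircase path. So an identity of `UT_2` preserves length, content and all
these support functions, and for words of length at most 9 with equal content eight directions
already separate all words, which is checked by evaluation.
-/
noncomputable def WithBot.intToEReal : WithBot ℤ → EReal :=
  WithBot.map fun n : ℤ => ((n : ℝ) : WithTop ℝ)

namespace WithBot

lemma intToEReal_strictMono : StrictMono intToEReal :=
  (WithTop.coe_strictMono.comp Int.cast_strictMono).withBot_map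

@[simp] lemma intToEReal_bot : intToEReal ⊥ = ⊥ := rfl

@[simp] lemma intToEReal_coe (n : ℤ) : intToEReal n = ((n : ℝ) : EReal) := rfl

lemma intToEReal_max (a b : WithBot ℤ) :
    intToEReal (max a b) = max (intToEReal a) (intToEReal b) :=
  intToEReal_strictMono.monotone.map_max

lemma intToEReal_coe_add (n : ℤ) (a : WithBot ℤ) :
    intToEReal (n + a) = (n : ℝ) + intToEReal a := by
  induction a using WithBot.recBotCoe with
  | bot => simp
  | coe m => simp [← WithBot.coe_add, EReal.coe_add]

end WithBot

lemma EReal.iSup_fin_two (f : Fin 2 → EReal) : (⨆ k, f k) = max (f 0) (f 1) :=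
  le_antisymm (iSup_le (Fin.forall_fin_two.2 ⟨le_max_left _ _, le_max_right _ _⟩))
    (max_le (le_iSup f 0) (le_iSup f 1))

lemma tProd_cons {n : ℕ} (A : Matrix (Fin n) (Fin n) EReal)
    (l : List (Matrix (Fin n) (Fin n) EReal)) :
    tProd (A :: l) = tmul A (tProd l) := rfl

lemma tmul_two_apply (A B : Matrix (Fin 2) (Fin 2) EReal) (i j : Fin 2) :
    tmul A B i j = max (A i 0 + B 0 j) (A i 1 + B 1 j) := by
  simp only [tmul, EReal.iSup_fin_two]

section Staircase

variable {σ : Type*}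

/-- `maxPrefixWeight p g w = max_i (p w₀ + ⋯ + p wᵢ₋₁ + g wᵢ)`. -/
def maxPrefixWeight (p : σ → ℤ) (g : σ → WithBot ℤ) : List σ → WithBot ℤ
  | [] => ⊥
  | s :: t => max (g s) (p s + maxPrefixWeight p g t)

noncomputable def staircaseMatrix (p : σ → ℤ) (g : σ → WithBot ℤ) (s : σ) :
    Matrix (Fin 2) (Fin 2) EReal :=
  !![((p s : ℝ) : EReal), (g s).intToEReal; ⊥, 0]

lemma isUT_staircaseMatrix (p : σ → ℤ) (g : σ → WithBot ℤ) (s : σ) :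
    IsUT (staircaseMatrix p g s) := by
  intro i j hij
  fin_cases i <;> fin_cases j <;> simp_all [staircaseMatrix]

lemma tProd_map_staircaseMatrix (p : σ → ℤ) (g : σ → WithBot ℤ) (w : List σ) :
    tProd (w.map (staircaseMatrix p g)) =
      !![(((w.map p).sum : ℝ) : EReal), (maxPrefixWeight p g w).intToEReal; ⊥, 0] := by
  induction w with
  | nil =>
    ext i j
    fin_cases i <;> fin_cases j <;> simp [tProd, tOne, maxPrefixWeight]
  | cons s t ih =>
    rw [List.map_cons, tProd_cons, ih]
    ext i j
    fin_cases i <;> fin_cases j <;>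
      simp [tmul_two_apply, staircaseMatrix, maxPrefixWeight, WithBot.intToEReal_max,
        WithBot.intToEReal_coe_add, EReal.coe_add, max_comm]

end Staircase

namespace UTId

variable {σ : Type*} {w v : List σ}

lemma sum_map_eq_and_maxPrefixWeight_eq (h : UTId 2 w v) (p : σ → ℤ) (g : σ → WithBot ℤ) :
    (w.map p).sum = (v.map p).sum ∧ maxPrefixWeight p g w = maxPrefixWeight p g v := by
  have H := h (staircaseMatrix p g) (isUT_staircaseMatrix p g)
  rw [tProd_map_staircaseMatrix, tProd_map_staircaseMatrix] at H
  refine ⟨?_, WithBot.intToEReal_strictMono.injective ?_⟩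
  · exact Int.cast_injective (EReal.coe_injective (congrFun (congrFun H 0) 0))
  · exact congrFun (congrFun H 0) 1

lemma count_eq [DecidableEq σ] (h : UTId 2 w v) (c : σ) : w.count c = v.count c := by
  have sum_eq_count (u : List σ) :
      (u.map fun s => if s = c then (1 : ℤ) else 0).sum = u.count c := by
    induction u with
    | nil => simp
    | cons s t ih => by_cases hs : s = c <;> simp [hs, ih, add_comm]
  have := (h.sum_map_eq_and_maxPrefixWeight_eq (fun s => if s = c then 1 else 0) ⊥).1
  rw [sum_eq_count, sum_eq_count] at this
  exact_mod_cast this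

lemma length_eq (h : UTId 2 w v) : w.length = v.length := by
  have := (h.sum_map_eq_and_maxPrefixWeight_eq (fun _ => 1) ⊥).1
  simpa using this

end UTId

/-- Each entry `(p, q, c)` stands for the support function, in direction `(p, q)`, of the
`c`-heights of the staircase path, where `true` steps by `(1, 0)` and `false` by `(0, 1)`.
These eight directions were found by a computer search. -/
def separatingDirections : List (ℤ × ℤ × Bool) :=
  [(-9, 5, false), (7, -3, false), (3, -5, true), (-4, 9, true), (-8, 9, true), (4, -3, true),
    (-9, 1, false), (-2, 7, true)]

def staircaseSignature (w : List Bool) : List (WithBot ℤ) :=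
  separatingDirections.map fun d =>
    maxPrefixWeight (fun b => cond b d.1 d.2.1) (fun b => if b = d.2.2 then 0 else ⊥) w

lemma UTId.staircaseSignature_eq {w v : List Bool} (h : UTId 2 w v) :
    staircaseSignature w = staircaseSignature v :=
  List.map_congr_left fun _ _ => (h.sum_map_eq_and_maxPrefixWeight_eq _ _).2

def boolWords : ℕ → List (List Bool)
  | 0 => [[]]
  | n + 1 => (boolWords n).flatMap fun w => [true :: w, false :: w]

lemma mem_boolWords (w : List Bool) : w ∈ boolWords w.length := by
  induction w with
  | nil => simp [boolWords]
  | cons c t ih => cases c <;> simpa [boolWords] using ih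

lemma staircaseSignature_nodup :
    ∀ n ≤ 9, ∀ k ≤ n,
      (((boolWords n).filter (·.count true = k)).map staircaseSignature).Nodup := by
  decide +kernel

theorem isoterm_of_length_le_nine_general (w : List Bool) (hlen : w.length ≤ 9)
    (v : List Bool) (h : UTId 2 w v) : v = w := by
  have mem_words (u : List Bool) (hu : u.length = w.length) (hc : u.count true = w.count true) :
      u ∈ (boolWords w.length).filter (·.count true = w.count true) := by
    simpa [hc] using hu ▸ mem_boolWords u
  exact List.inj_on_of_nodup_map (staircaseSignature_nodup _ hlen _ List.count_le_length)
    (mem_words v h.length_eq.symm (h.count_eq true).symm) (mem_words w rfl rfl)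
    h.staircaseSignature_eq.symm

/-- Every word over a two-letter alphabet of length at most 9 is an isoterm for `UT_2`. -/
theorem isoterm_of_length_le_nine (w : List Bool) (hw : w ≠ []) (hlen : w.length ≤ 9)
    (v : List Bool) (hv : v ≠ []) (h : UTId 2 w v) : v = w :=
  isoterm_of_length_le_nine_general w hlen v h
end

section
/- If w ∼_n v for words over alphabet Σ and Δ ⊊ Σ is a proper subset of letters, then the words w∖Δ and v∖Δ obtained by deleting all occurrences of letters in Δ satisfy (w∖Δ) ∼_n (v∖Δ), provided both are nonempty. -/
lemma tOne_tmul {n : ℕ} (A : Matrix (Fin n) (Fin n) EReal) : tmul tOne A = A := by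
  funext i j
  show (⨆ k, (if i = k then (0:EReal) else ⊥) + A k j) = A i j
  apply le_antisymm
  · apply iSup_le
    intro k
    by_cases hk : i = k
    · subst hk; simp
    · simp [hk]
  · simpa using le_iSup (fun k => (if i = k then (0:EReal) else ⊥) + A k j) i

lemma isUT_tOne {n : ℕ} : IsUT (tOne (n := n)) := by
  intro i j hij
  simp only [tOne]
  exact if_neg (ne_of_gt hij)

lemma tProd_filter {n : ℕ} {σ : Type*} (Δ : Finset σ) [DecidableEq σ]
    (φ : σ → Matrix (Fin n) (Fin n) EReal) (l : List σ) :
    tProd (l.map (fun s => if s ∈ Δ then tOne else φ s)) =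
      tProd ((l.filter (fun s => s ∉ Δ)).map φ) := by
  induction l with
  | nil => rfl
  | cons a l ih =>
    by_cases ha : a ∈ Δ
    · simp only [List.map_cons, List.filter_cons, ha, tProd, List.foldr_cons, if_pos ha,
        decide_eq_true_eq, not_true, if_neg (by simp [ha] : ¬ (decide ¬ a ∈ Δ) = true)]
      rw [show List.foldr tmul tOne (List.map (fun s => if s ∈ Δ then tOne else φ s) l)
            = tProd (List.map (fun s => if s ∈ Δ then tOne else φ s) l) from rfl, ih]
      exact tOne_tmul _
    · simp only [List.map_cons, List.filter_cons, if_neg ha,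
        if_pos (by simp [ha] : (decide ¬ a ∈ Δ) = true), List.map_cons, tProd,
        List.foldr_cons]
      rw [show List.foldr tmul tOne (List.map (fun s => if s ∈ Δ then tOne else φ s) l)
            = tProd (List.map (fun s => if s ∈ Δ then tOne else φ s) l) from rfl, ih]
      rfl

/-- Deleting all letters of a proper subset `Δ ⊊ Σ` from both sides of a `UT_n`
identity yields a `UT_n` identity (provided the resulting words are nonempty). -/
theorem utId_delete_letters {σ : Type*} [Fintype σ] [DecidableEq σ] (n : ℕ) (hn : 2 ≤ n)
    (w v : List σ) (hw : w ≠ []) (hv : v ≠ []) (h : UTId n w v)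
    (Δ : Finset σ) (hΔ : Δ ≠ Finset.univ)
    (hw' : w.filter (fun s => s ∉ Δ) ≠ []) (hv' : v.filter (fun s => s ∉ Δ) ≠ []) :
    UTId n (w.filter (fun s => s ∉ Δ)) (v.filter (fun s => s ∉ Δ)) := by
  intro φ hφ
  have hψ : ∀ s : σ, IsUT ((fun s => if s ∈ Δ then tOne else φ s) s) := by
    intro s
    by_cases hs : s ∈ Δ
    · simpa [hs] using isUT_tOne (n := n)
    · simpa [hs] using hφ s
  have := h (fun s => if s ∈ Δ then tOne else φ s) hψ
  rwa [tProd_filter Δ φ w, tProd_filter Δ φ v] at this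
end
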